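/- arXiv:2410.21437 — 4 statements merged into one kernel-verified Lean document; each statement's English description precedes it below -/
import Mathlib

section
/- Let (w_n) and (u_n) be sequences such that for every n ≥ 1 and every partition n = n_1 + ⋯ + n_k into positive integers, w_n ≤ u_{n_1} + ⋯ + u_{n_k}. Then there exists a subadditive sequence (v_n) with w_n ≤ v_n ≤ u_n for all n ≥ 1. -/
/-!
Take `v n` to be the infimum of `u n₁ + ⋯ + u nₖ` over all partitions of `n` into positive
parts. Concatenating a partition of `m` with one of `n` gives a partition of `m + n`, so `v` is
subadditive; the trivial partition `n = n` gives `v n ≤ u n`, and the hypothesis says precisely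
that `w n` is a lower bound of the set whose infimum is `v n`.
-/

open scoped Pointwise

section PartitionSums

variable {M : Type*}

def partitionSums [AddMonoid M] (u : ℕ → M) (n : ℕ) : Set M :=
  {x | ∃ l : List ℕ, (∀ i ∈ l, 1 ≤ i) ∧ l.sum = n ∧ x = (l.map u).sum}

section AddMonoid

variable [AddMonoid M] (u : ℕ → M)

theorem self_mem_partitionSums {n : ℕ} (hn : 1 ≤ n) : u n ∈ partitionSums u n :=
  ⟨[n], by simpa using hn, by simp, by simp⟩

theorem partitionSums_add_subset (m n : ℕ) :
    partitionSums u m + partitionSums u n ⊆ partitionSums u (m + n) := by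
  rintro _ ⟨_, ⟨l, hl, rfl, rfl⟩, _, ⟨l', hl', rfl, rfl⟩, rfl⟩
  refine ⟨l ++ l', ?_, List.sum_append, by simp⟩
  simpa only [List.mem_append, or_imp, forall_and] using ⟨hl, hl'⟩

end AddMonoid

theorem sInf_partitionSums_le [ConditionallyCompleteLattice M] [AddMonoid M] {u : ℕ → M} {n : ℕ}
    (hn : 1 ≤ n) (hbdd : BddBelow (partitionSums u n)) : sInf (partitionSums u n) ≤ u n :=
  csInf_le hbdd (self_mem_partitionSums u hn)

section Infimum

variable [ConditionallyCompleteLattice M] [AddGroup M] [AddLeftMono M] [AddRightMono M]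
  {u : ℕ → M}

theorem sInf_partitionSums_add_le (hbdd : ∀ n, 1 ≤ n → BddBelow (partitionSums u n))
    {m n : ℕ} (hm : 1 ≤ m) (hn : 1 ≤ n) :
    sInf (partitionSums u (m + n)) ≤ sInf (partitionSums u m) + sInf (partitionSums u n) := by
  have hne : ∀ k, 1 ≤ k → (partitionSums u k).Nonempty :=
    fun k hk => ⟨u k, self_mem_partitionSums u hk⟩
  calc sInf (partitionSums u (m + n))
      ≤ sInf (partitionSums u m + partitionSums u n) :=
        csInf_le_csInf (hbdd _ (by omega)) ((hne m hm).add (hne n hn))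
          (partitionSums_add_subset u m n)
    _ = sInf (partitionSums u m) + sInf (partitionSums u n) :=
        csInf_add (hne m hm) (hbdd m hm) (hne n hn) (hbdd n hn)

end Infimum

end PartitionSums

theorem sandwich_subadditive (u w : ℕ → ℝ)
    (h : ∀ n, 1 ≤ n → ∀ l : List ℕ, (∀ i ∈ l, 1 ≤ i) → l.sum = n → w n ≤ (l.map u).sum) :
    ∃ v : ℕ → ℝ, (∀ m n, 1 ≤ m → 1 ≤ n → v (m + n) ≤ v m + v n) ∧
      ∀ n, 1 ≤ n → w n ≤ v n ∧ v n ≤ u n := by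
  have hlower : ∀ n, 1 ≤ n → w n ∈ lowerBounds (partitionSums u n) := by
    rintro n hn _ ⟨l, hl, hsum, rfl⟩
    exact h n hn l hl hsum
  have hbdd : ∀ n, 1 ≤ n → BddBelow (partitionSums u n) := fun n hn => ⟨w n, hlower n hn⟩
  refine ⟨fun n => sInf (partitionSums u n),
    fun m n hm hn => sInf_partitionSums_add_le hbdd hm hn, fun n hn => ⟨?_, ?_⟩⟩
  · exact le_csInf ⟨u n, self_mem_partitionSums u hn⟩ (hlower n hn)
  · exact sInf_partitionSums_le hn (hbdd n hn)
end

section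
/- Let (u_n)_{n≥1} be a subadditive sequence and define f : [1,∞) → ℝ by piecewise linear interpolation: f(t·n + (1−t)(n+1)) = t·u_n + (1−t)·u_{n+1} for t ∈ [0,1] and n ∈ ℕ. Then f is subadditive: f(x+y) ≤ f(x) + f(y) for all x, y ≥ 1. -/
/-!
Write `x = m + s` and `y = n + t` with `m, n ≥ 1` integers and `s, t ∈ [0, 1)`. If `s + t ≤ 1`,
then `f (x + y)` is the convex combination `(1 - s - t) u_{m+n} + s u_{m+n+1} + t u_{m+n+1}`;
bounding these by `u_m + u_n`, `u_{m+1} + u_n` and `u_m + u_{n+1}` respectively regroups exactly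
into `f x + f y`. If `s + t ≥ 1`, the same works on the next segment with weights
`1 - s`, `1 - t`, `s + t - 1` on `u_{m+n+1}, u_{m+n+1}, u_{m+n+2}`.
-/

lemma exists_nat_add_of_one_le {x : ℝ} (hx : 1 ≤ x) :
    ∃ m : ℕ, 1 ≤ m ∧ ∃ s : ℝ, 0 ≤ s ∧ s < 1 ∧ x = m + s :=
  ⟨⌊x⌋₊, Nat.le_floor (by exact_mod_cast hx), x - ⌊x⌋₊,
    sub_nonneg.2 (Nat.floor_le (by linarith)),
    by linarith [Nat.lt_floor_add_one x], by ring⟩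

def chordValue (u : ℕ → ℝ) (k : ℕ) (s : ℝ) : ℝ :=
  (1 - s) * u k + s * u (k + 1)

section

variable {u : ℕ → ℝ}

lemma eq_chordValue {f : ℝ → ℝ}
    (hf : ∀ x : ℝ, 1 ≤ x → f x = u ⌊x⌋₊ + (x - ⌊x⌋₊) * (u (⌊x⌋₊ + 1) - u ⌊x⌋₊))
    {k : ℕ} (hk : 1 ≤ k) {s : ℝ} (hs₀ : 0 ≤ s) (hs₁ : s ≤ 1) :
    f (k + s) = chordValue u k s := by
  have hk' : (1 : ℝ) ≤ k := by exact_mod_cast hk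
  rw [hf _ (by linarith), chordValue]
  rcases hs₁.lt_or_eq with hs₁ | rfl
  · have hfloor : ⌊(k : ℝ) + s⌋₊ = k := by
      rw [Nat.floor_eq_iff (by linarith)]
      exact ⟨by linarith, by linarith⟩
    rw [hfloor]
    ring
  · have hfloor : ⌊(k : ℝ) + 1⌋₊ = k + 1 := by exact_mod_cast Nat.floor_natCast (k + 1)
    rw [hfloor]
    push_cast
    ring

lemma chordValue_add_le_of_add_le_one (hsub : ∀ m n, 1 ≤ m → 1 ≤ n → u (m + n) ≤ u m + u n)
    {m n : ℕ} (hm : 1 ≤ m) (hn : 1 ≤ n) {s t : ℝ}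
    (hs : 0 ≤ s) (ht : 0 ≤ t) (hst : s + t ≤ 1) :
    chordValue u (m + n) (s + t) ≤ chordValue u m s + chordValue u n t := by
  have h₀ := mul_le_mul_of_nonneg_left (hsub m n hm hn) (sub_nonneg.2 hst)
  have h₁ := mul_le_mul_of_nonneg_left (hsub (m + 1) n (by omega) hn) hs
  have h₂ := mul_le_mul_of_nonneg_left (hsub m (n + 1) hm (by omega)) ht
  rw [Nat.add_right_comm] at h₁
  rw [← Nat.add_assoc] at h₂
  simp only [chordValue]
  linarith

lemma chordValue_add_le_of_one_le_add (hsub : ∀ m n, 1 ≤ m → 1 ≤ n → u (m + n) ≤ u m + u n)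
    {m n : ℕ} (hm : 1 ≤ m) (hn : 1 ≤ n) {s t : ℝ}
    (hs : s ≤ 1) (ht : t ≤ 1) (hst : 1 ≤ s + t) :
    chordValue u (m + n + 1) (s + t - 1) ≤ chordValue u m s + chordValue u n t := by
  have h₀ := mul_le_mul_of_nonneg_left (hsub m (n + 1) hm (by omega)) (sub_nonneg.2 hs)
  have h₁ := mul_le_mul_of_nonneg_left (hsub (m + 1) n (by omega) hn) (sub_nonneg.2 ht)
  have h₂ := mul_le_mul_of_nonneg_left (hsub (m + 1) (n + 1) (by omega) (by omega))
    (sub_nonneg.2 hst)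
  rw [← Nat.add_assoc] at h₀
  rw [Nat.add_right_comm] at h₁
  rw [show m + 1 + (n + 1) = m + n + 1 + 1 by omega] at h₂
  simp only [chordValue]
  linarith

end

theorem interpolant_subadditive (u : ℕ → ℝ) (f : ℝ → ℝ)
    (hsub : ∀ m n, 1 ≤ m → 1 ≤ n → u (m + n) ≤ u m + u n)
    (hf : ∀ x : ℝ, 1 ≤ x → f x = u ⌊x⌋₊ + (x - ⌊x⌋₊) * (u (⌊x⌋₊ + 1) - u ⌊x⌋₊)) :
    ∀ x y : ℝ, 1 ≤ x → 1 ≤ y → f (x + y) ≤ f x + f y := by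
  intro x y hx hy
  obtain ⟨m, hm, s, hs₀, hs₁, rfl⟩ := exists_nat_add_of_one_le hx
  obtain ⟨n, hn, t, ht₀, ht₁, rfl⟩ := exists_nat_add_of_one_le hy
  rw [eq_chordValue hf hm hs₀ hs₁.le, eq_chordValue hf hn ht₀ ht₁.le]
  rcases le_total (s + t) 1 with hst | hst
  · have hsum : (m : ℝ) + s + (n + t) = ↑(m + n) + (s + t) := by push_cast; ring
    rw [hsum, eq_chordValue hf (by omega) (by linarith) hst]
    exact chordValue_add_le_of_add_le_one hsub hm hn hs₀ ht₀ hst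
  · have hsum : (m : ℝ) + s + (n + t) = ↑(m + n + 1) + (s + t - 1) := by push_cast; ring
    rw [hsum, eq_chordValue hf (by omega) (by linarith) (by linarith)]
    exact chordValue_add_le_of_one_le_add hsub hm hn hs₁.le ht₁.le hst
end

section
/- Let (u_i)_{i=1}^n be a subadditive finite sequence with n even. Then (1/2)(1 + 2/n)·u_n − (1/n)·u_{n/2} ≤ (u_1 + ⋯ + u_n)/n. -/
theorem subadditive_mean_lower_even (n : ℕ) (hn : 1 ≤ n) (hev : Even n) (u : ℕ → ℝ)
    (hsub : ∀ i j, 1 ≤ i → 1 ≤ j → i + j ≤ n → u (i + j) ≤ u i + u j) :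
    (1 / 2) * (1 + 2 / n) * u n - (1 / n) * u (n / 2) ≤
      (∑ i ∈ Finset.Icc 1 n, u i) / n := by
  obtain ⟨m, hm⟩ := hev
  have hn2 : 2 ≤ n := by omega
  have hm1 : 1 ≤ m := by omega
  have hhalf : n / 2 = m := by omega
  -- u n ≤ 2 * u m
  have h2 : u n ≤ 2 * u m := by
    have := hsub m m hm1 hm1 (by omega)
    have hmm : m + m = n := by omega
    rw [hmm] at this
    linarith
  -- reflection sum equality
  have hrefl : ∑ i ∈ Finset.Icc 1 (n - 1), u (n - i) = ∑ i ∈ Finset.Icc 1 (n - 1), u i := by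
    apply Finset.sum_nbij' (fun i => n - i) (fun i => n - i)
    all_goals intro a ha <;> simp only [Finset.mem_Icc] at * <;> omega
  -- main sum inequality
  have h1 : (↑(n - 1) : ℝ) * u n ≤ 2 * ∑ i ∈ Finset.Icc 1 (n - 1), u i := by
    have hb : ∑ _i ∈ Finset.Icc 1 (n - 1), u n ≤
        ∑ i ∈ Finset.Icc 1 (n - 1), (u i + u (n - i)) := by
      apply Finset.sum_le_sum
      intro i hi
      simp only [Finset.mem_Icc] at hi
      have := hsub i (n - i) hi.1 (by omega) (by omega)
      have h' : i + (n - i) = n := by omega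
      rw [h'] at this
      exact this
    rw [Finset.sum_const, Nat.card_Icc, Finset.sum_add_distrib, hrefl] at hb
    have : n - 1 + 1 - 1 = n - 1 := by omega
    rw [this] at hb
    rw [nsmul_eq_mul] at hb
    linarith
  have hsplit : ∑ i ∈ Finset.Icc 1 n, u i = (∑ i ∈ Finset.Icc 1 (n - 1), u i) + u n := by
    have : n = (n - 1) + 1 := by omega
    rw [this, Finset.sum_Icc_succ_top (by omega)]
    simp
  have hnpos : (0:ℝ) < n := by positivity
  have hcast : ((n - 1 : ℕ) : ℝ) = (n : ℝ) - 1 := by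
    rw [Nat.cast_sub hn]; simp
  rw [hcast] at h1
  rw [hhalf, hsplit, le_div_iff₀ hnpos]
  have hne : (n:ℝ) ≠ 0 := ne_of_gt hnpos
  have hmain : ((n:ℝ)+2)*u n - 2*u m ≤ 2*((∑ i ∈ Finset.Icc 1 (n-1), u i) + u n) := by
    linarith
  calc (1 / 2 * (1 + 2 / ↑n) * u n - 1 / ↑n * u m) * ↑n
      = (((n:ℝ)+2)*u n - 2*u m)/2 := by field_simp
    _ ≤ (∑ i ∈ Finset.Icc 1 (n-1), u i) + u n := by linarith
end

section
/- Let (u_i)_{i=1}^n be a subadditive finite sequence with n odd. Then (1/2)(1 + 1/n)·u_n ≤ (u_1 + ⋯ + u_n)/n. -/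
theorem subadditive_mean_lower_odd (n : ℕ) (hodd : Odd n) (u : ℕ → ℝ)
    (hsub : ∀ i j, 1 ≤ i → 1 ≤ j → i + j ≤ n → u (i + j) ≤ u i + u j) :
    (1 / 2) * (1 + 1 / n) * u n ≤ (∑ i ∈ Finset.Icc 1 n, u i) / n := by
  have hn : 1 ≤ n := hodd.pos
  have key : ∀ i ∈ Finset.Icc 1 (n - 1), u n ≤ u i + u (n - i) := by
    intro i hi
    simp only [Finset.mem_Icc] at hi
    have h1 : 1 ≤ i := hi.1
    have h2 : i ≤ n - 1 := hi.2
    have hin : i + (n - i) = n := by omega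
    have := hsub i (n - i) h1 (by omega) (by omega)
    rwa [hin] at this
  have hcard : (Finset.Icc 1 (n - 1)).card = n - 1 := by
    rw [Nat.card_Icc]; omega
  have h1 : (n - 1 : ℕ) • u n ≤ ∑ i ∈ Finset.Icc 1 (n - 1), (u i + u (n - i)) := by
    have := Finset.card_nsmul_le_sum _ _ _ key
    rwa [hcard] at this
  have hrefl : ∑ i ∈ Finset.Icc 1 (n - 1), u (n - i) = ∑ i ∈ Finset.Icc 1 (n - 1), u i := by
    apply Finset.sum_nbij' (fun i => n - i) (fun i => n - i)
    · intro a ha; simp only [Finset.mem_Icc] at *; omega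
    · intro a ha; simp only [Finset.mem_Icc] at *; omega
    · intro a ha; simp only [Finset.mem_Icc] at ha; omega
    · intro a ha; simp only [Finset.mem_Icc] at ha; omega
    · intro a ha; rfl
  have hsplit : ∑ i ∈ Finset.Icc 1 n, u i = (∑ i ∈ Finset.Icc 1 (n - 1), u i) + u n := by
    have : n = (n - 1) + 1 := by omega
    rw [this, Finset.sum_Icc_succ_top (by omega), ← this]
  rw [Finset.sum_add_distrib, hrefl] at h1
  set S := ∑ i ∈ Finset.Icc 1 n, u i with hS
  have hT : ∑ i ∈ Finset.Icc 1 (n - 1), u i = S - u n := by rw [hsplit]; ring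
  rw [hT, nsmul_eq_mul] at h1
  have hcast : ((n - 1 : ℕ) : ℝ) = (n : ℝ) - 1 := by
    rw [Nat.cast_sub hn]; simp
  rw [hcast] at h1
  have hnp : (0 : ℝ) < n := by exact_mod_cast hn
  have hne : (n : ℝ) ≠ 0 := ne_of_gt hnp
  rw [le_div_iff₀ hnp]
  have heq : 1 / 2 * (1 + 1 / (n : ℝ)) * u n * n = ((n : ℝ) + 1) * u n / 2 := by
    field_simp
  rw [heq]
  linarith [h1]
end
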